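/- If U is a star-term, then for every c-term V both l_x(U) ⋆ V ▷* U[x:=V] and V ⋆ l_x(U) ▷* U[x:=V]. -/

import Mathlib

/-! Types: atoms, their formal duals, conjunction, disjunction. -/

inductive MTy : Type where
  | atom : ℕ → MTy
  | natom : ℕ → MTy
  | and : MTy → MTy → MTy
  | or : MTy → MTy → MTy
deriving DecidableEq

/-- Negation of an m-type. -/
def MTy.neg : MTy → MTy
  | .atom a => .natom a
  | .natom a => .atom a
  | .and A B => .or A.neg B.neg
  | .or A B => .and A.neg B.neg

/-- Types: m-types or ⊥. -/
inductive Ty : Type where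
  | m : MTy → Ty
  | bot : Ty
deriving DecidableEq

/-! λ_s-terms of the system λ^Sym_Prop. -/

inductive LTerm : Type where
  | var : ℕ → LTerm
  | pair : LTerm → LTerm → LTerm
  | inj1 : LTerm → LTerm
  | inj2 : LTerm → LTerm
  | lam : ℕ → LTerm → LTerm
  | star : LTerm → LTerm → LTerm
deriving DecidableEq

namespace LTerm

/-- Free variables. -/
def Fv : LTerm → Finset ℕ
  | var x => {x}
  | pair u v => u.Fv ∪ v.Fv
  | inj1 t => t.Fv
  | inj2 t => t.Fv
  | lam x t => t.Fv.erase x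
  | star u v => u.Fv ∪ v.Fv

/-- Substitution u[x := v]. -/
def subst : LTerm → ℕ → LTerm → LTerm
  | var y, x, v => if y = x then v else var y
  | pair a b, x, v => pair (a.subst x v) (b.subst x v)
  | inj1 t, x, v => inj1 (t.subst x v)
  | inj2 t, x, v => inj2 (t.subst x v)
  | lam y t, x, v => if y = x then lam y t else lam y (t.subst x v)
  | star a b, x, v => star (a.subst x v) (b.subst x v)

/-- Number of free occurrences of a variable. -/
def countFree : LTerm → ℕ → ℕ
  | var y, x => if y = x then 1 else 0
  | pair a b, x => a.countFree x + b.countFree x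
  | inj1 t, x => t.countFree x
  | inj2 t, x => t.countFree x
  | lam y t, x => if y = x then 0 else t.countFree x
  | star a b, x => a.countFree x + b.countFree x

/-- A natural number strictly larger than every variable occurring in the term. -/
def freshVar : LTerm → ℕ
  | var x => x + 1
  | pair u v => max u.freshVar v.freshVar
  | inj1 t => t.freshVar
  | inj2 t => t.freshVar
  | lam x t => max (x + 1) t.freshVar
  | star u v => max u.freshVar v.freshVar

end LTerm

/-- Typing for λ_s-terms (Γ ⊢_{λs} t : C). Contexts assign m-types to variables. -/
inductive LTyping : (ℕ → Option MTy) → LTerm → Ty → Prop where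
  | var {Γ : ℕ → Option MTy} {x : ℕ} {A : MTy} :
      Γ x = some A → LTyping Γ (.var x) (.m A)
  | pair {Γ u v A B} :
      LTyping Γ u (.m A) → LTyping Γ v (.m B) → LTyping Γ (.pair u v) (.m (.and A B))
  | inj1 {Γ t A B} :
      LTyping Γ t (.m A) → LTyping Γ (.inj1 t) (.m (.or A B))
  | inj2 {Γ t A B} :
      LTyping Γ t (.m B) → LTyping Γ (.inj2 t) (.m (.or A B))
  | lam {Γ x t A} :
      LTyping (Function.update Γ x (some A)) t .bot → LTyping Γ (.lam x t) (.m A.neg)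
  | star {Γ u v A} :
      LTyping Γ u (.m A.neg) → LTyping Γ v (.m A) → LTyping Γ (.star u v) .bot

/-- One-step reduction of λ_s-terms, closed under all term contexts. -/
inductive LStep : LTerm → LTerm → Prop where
  | beta {x u v} : LStep (.star (.lam x u) v) (u.subst x v)
  | betaBar {x u v} : LStep (.star v (.lam x u)) (u.subst x v)
  | eta {x u} : x ∉ u.Fv → LStep (.lam x (.star u (.var x))) u
  | etaBar {x u} : x ∉ u.Fv → LStep (.lam x (.star (.var x) u)) u
  | pi1 {u v w} : LStep (.star (.pair u v) (.inj1 w)) (.star u w)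
  | pi2 {u v w} : LStep (.star (.pair u v) (.inj2 w)) (.star v w)
  | pi1Bar {u v w} : LStep (.star (.inj1 w) (.pair u v)) (.star w u)
  | pi2Bar {u v w} : LStep (.star (.inj2 w) (.pair u v)) (.star w v)
  | triv {x u v} : (∃ Γ, LTyping Γ u .bot) → (∃ Γ, LTyping Γ v .bot) →
      u.countFree x = 1 → u ≠ .var x → LStep (u.subst x v) v
  | pairL {u u' v} : LStep u u' → LStep (.pair u v) (.pair u' v)
  | pairR {u v v'} : LStep v v' → LStep (.pair u v) (.pair u v')
  | inj1C {t t'} : LStep t t' → LStep (.inj1 t) (.inj1 t')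
  | inj2C {t t'} : LStep t t' → LStep (.inj2 t) (.inj2 t')
  | lamC {x t t'} : LStep t t' → LStep (.lam x t) (.lam x t')
  | starL {u u' v} : LStep u u' → LStep (.star u v) (.star u' v)
  | starR {u v v'} : LStep v v' → LStep (.star u v) (.star u v')

/-- ω-reduction: reduction of a redex which is not within the scope of a λ-abstraction. -/
inductive LStepOmega : LTerm → LTerm → Prop where
  | beta {x u v} : LStepOmega (.star (.lam x u) v) (u.subst x v)
  | betaBar {x u v} : LStepOmega (.star v (.lam x u)) (u.subst x v)
  | eta {x u} : x ∉ u.Fv → LStepOmega (.lam x (.star u (.var x))) u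
  | etaBar {x u} : x ∉ u.Fv → LStepOmega (.lam x (.star (.var x) u)) u
  | pi1 {u v w} : LStepOmega (.star (.pair u v) (.inj1 w)) (.star u w)
  | pi2 {u v w} : LStepOmega (.star (.pair u v) (.inj2 w)) (.star v w)
  | pi1Bar {u v w} : LStepOmega (.star (.inj1 w) (.pair u v)) (.star w u)
  | pi2Bar {u v w} : LStepOmega (.star (.inj2 w) (.pair u v)) (.star w v)
  | triv {x u v} : (∃ Γ, LTyping Γ u .bot) → (∃ Γ, LTyping Γ v .bot) →
      u.countFree x = 1 → u ≠ .var x → LStepOmega (u.subst x v) v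
  | pairL {u u' v} : LStepOmega u u' → LStepOmega (.pair u v) (.pair u' v)
  | pairR {u v v'} : LStepOmega v v' → LStepOmega (.pair u v) (.pair u v')
  | inj1C {t t'} : LStepOmega t t' → LStepOmega (.inj1 t) (.inj1 t')
  | inj2C {t t'} : LStepOmega t t' → LStepOmega (.inj2 t) (.inj2 t')
  | starL {u u' v} : LStepOmega u u' → LStepOmega (.star u v) (.star u' v)
  | starR {u v v'} : LStepOmega v v' → LStepOmega (.star u v) (.star u v')

/-! c-terms of the system CCL. -/

inductive CTerm : Type where
  | var : ℕ → CTerm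
  | K : CTerm
  | S : CTerm
  | C : CTerm
  | P : CTerm
  | Q1 : CTerm
  | Q2 : CTerm
  | app : CTerm → CTerm → CTerm
  | star : CTerm → CTerm → CTerm
deriving DecidableEq

namespace CTerm

/-- The combinator I = (S K K). -/
def I : CTerm := .app (.app .S .K) .K

/-- Substitution U[x := V]. -/
def subst : CTerm → ℕ → CTerm → CTerm
  | var y, x, v => if y = x then v else var y
  | app a b, x, v => app (a.subst x v) (b.subst x v)
  | star a b, x, v => star (a.subst x v) (b.subst x v)
  | c, _, _ => c

/-- Variables occurring in a c-term. -/
def vars : CTerm → Finset ℕ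
  | var y => {y}
  | app a b => a.vars ∪ b.vars
  | star a b => a.vars ∪ b.vars
  | _ => ∅

/-- A c-term is a pre-term iff it does not contain the symbol ⋆. -/
def PreTerm : CTerm → Prop
  | star _ _ => False
  | app a b => a.PreTerm ∧ b.PreTerm
  | _ => True

/-- A c-term is a star-term iff it is U ⋆ V for some pre-terms U, V. -/
def StarTerm (T : CTerm) : Prop :=
  ∃ U V : CTerm, U.PreTerm ∧ V.PreTerm ∧ T = .star U V

/-- The abstraction algorithm l_x. -/
def lx (x : ℕ) : CTerm → CTerm
  | var y => if y = x then I else .app .K (var y)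
  | app U V => if x ∈ (app U V).vars then .app (.app .S (lx x U)) (lx x V)
               else .app .K (app U V)
  | star U V => .app (.app .C (lx x U)) (lx x V)
  | T => .app .K T

end CTerm

/-- Typing for c-terms (Γ ⊢_c T : C). -/
inductive CTyping : (ℕ → Option MTy) → CTerm → Ty → Prop where
  | var {Γ : ℕ → Option MTy} {x : ℕ} {A : MTy} :
      Γ x = some A → CTyping Γ (.var x) (.m A)
  | K {Γ} (A B : MTy) :
      CTyping Γ .K (.m (.or A.neg (.or B A)))
  | S {Γ} (A B C : MTy) :
      CTyping Γ .S (.m (.or (.and A (.and B C.neg)) (.or (.and A B.neg) (.or A.neg C))))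
  | C {Γ} (A B : MTy) :
      CTyping Γ .C (.m (.or (.and A B) (.or (.and A B.neg) A.neg)))
  | P {Γ} (A B : MTy) :
      CTyping Γ .P (.m (.or A.neg (.or B.neg (.and A B))))
  | Q1 {Γ} (A B : MTy) :
      CTyping Γ .Q1 (.m (.or A.neg (.or A B)))
  | Q2 {Γ} (A B : MTy) :
      CTyping Γ .Q2 (.m (.or B.neg (.or A B)))
  | app {Γ U V A B} :
      CTyping Γ U (.m (.or A.neg B)) → CTyping Γ V (.m A) → CTyping Γ (.app U V) (.m B)
  | star {Γ U V A} :
      CTyping Γ U (.m A.neg) → CTyping Γ V (.m A) → CTyping Γ (.star U V) .bot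

/-- One-step reduction of c-terms, closed under all term contexts. -/
inductive CStep : CTerm → CTerm → Prop where
  | k {U V} : CStep (.app (.app .K U) V) U
  | s {U V W} : CStep (.app (.app (.app .S U) V) W) (.app (.app U W) (.app V W))
  | cr {U V W} : CStep (.star (.app (.app .C U) V) W) (.star (.app U W) (.app V W))
  | cl {U V W} : CStep (.star W (.app (.app .C U) V)) (.star (.app U W) (.app V W))
  | er {U} : CStep (.app (.app .C (.app .K U)) CTerm.I) U
  | el {U} : CStep (.app (.app .C CTerm.I) (.app .K U)) U
  | pq1 {U V W} : CStep (.star (.app (.app .P U) V) (.app .Q1 W)) (.star U W)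
  | pq2 {U V W} : CStep (.star (.app (.app .P U) V) (.app .Q2 W)) (.star V W)
  | qp1 {U V W} : CStep (.star (.app .Q1 W) (.app (.app .P U) V)) (.star W U)
  | qp2 {U V W} : CStep (.star (.app .Q2 W) (.app (.app .P U) V)) (.star W V)
  | simp {x W U V} : (∃ Γ, CTyping Γ W .bot) →
      CStep (W.subst x (.app (.app .C (.app .K U)) (.app .K V))) (.star U V)
  | appL {U U' V} : CStep U U' → CStep (.app U V) (.app U' V)
  | appR {U V V'} : CStep V V' → CStep (.app U V) (.app U V')
  | starL {U U' V} : CStep U U' → CStep (.star U V) (.star U' V)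
  | starR {U V V'} : CStep V V' → CStep (.star U V) (.star U V')

/-- The translation φ from λ_s-terms to c-terms. -/
def phi : LTerm → CTerm
  | .var x => .var x
  | .lam x t => CTerm.lx x (phi t)
  | .star u v => .star (phi u) (phi v)
  | .pair u v => .app (.app .P (phi u)) (phi v)
  | .inj1 t => .app .Q1 (phi t)
  | .inj2 t => .app .Q2 (phi t)

/-! Notations π_i and [·,·] for λ_s-terms, and the translation ψ. -/

/-- π_1 t = λx.(t ⋆ σ1(x)) with x ∉ Fv(t). -/
def proj1 (t : LTerm) : LTerm := .lam t.freshVar (.star t (.inj1 (.var t.freshVar)))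

/-- π_2 t = λx.(t ⋆ σ2(x)) with x ∉ Fv(t). -/
def proj2 (t : LTerm) : LTerm := .lam t.freshVar (.star t (.inj2 (.var t.freshVar)))

/-- [u,v] = λx.(u ⋆ ⟨v,x⟩) with x ∉ Fv(u) ∪ Fv(v). -/
def lapp (u v : LTerm) : LTerm :=
  .lam (max u.freshVar v.freshVar) (.star u (.pair v (.var (max u.freshVar v.freshVar))))

/-- The translation ψ from c-terms to λ_s-terms. -/
def psi : CTerm → LTerm
  | .var x => .var x
  | .K => .lam 0 (.star (proj1 (.var 0)) (proj2 (proj2 (.var 0))))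
  | .S => .lam 0 (.star
            (lapp (lapp (proj1 (.var 0)) (proj1 (proj2 (proj2 (.var 0)))))
                  (lapp (proj1 (proj2 (.var 0))) (proj1 (proj2 (proj2 (.var 0))))))
            (proj2 (proj2 (proj2 (.var 0)))))
  | .C => .lam 0 (.star (lapp (proj1 (.var 0)) (proj2 (proj2 (.var 0))))
                        (lapp (proj1 (proj2 (.var 0))) (proj2 (proj2 (.var 0)))))
  | .P => .lam 0 (.star (.pair (proj1 (.var 0)) (proj1 (proj2 (.var 0))))
                        (proj2 (proj2 (.var 0))))
  | .Q1 => .lam 0 (.star (.inj1 (proj1 (.var 0))) (proj2 (.var 0)))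
  | .Q2 => .lam 0 (.star (.inj2 (proj1 (.var 0))) (proj2 (.var 0)))
  | .app U V => lapp (psi U) (psi V)
  | .star U V => .star (psi U) (psi V)

/-!
On pre-terms `l_x` is bracket abstraction: `(l_x T) V ▷* T[x:=V]` by `S`, `K` and `I = S K K`
steps. For a star-term `A ⋆ B`, one `C`-step (on either side of the `⋆`) turns the redex into
`(l_x A V) ⋆ (l_x B V)`, whose two components then reduce independently.
-/

namespace CTerm

open Relation

theorem reflTransGen_app_left {U U' : CTerm} (V : CTerm) (h : ReflTransGen CStep U U') :
    ReflTransGen CStep (.app U V) (.app U' V) :=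
  h.lift (fun T => app T V) fun _ _ => CStep.appL

theorem reflTransGen_app_right (U : CTerm) {V V' : CTerm} (h : ReflTransGen CStep V V') :
    ReflTransGen CStep (.app U V) (.app U V') :=
  h.lift (fun T => app U T) fun _ _ => CStep.appR

theorem reflTransGen_star_left {U U' : CTerm} (V : CTerm) (h : ReflTransGen CStep U U') :
    ReflTransGen CStep (.star U V) (.star U' V) :=
  h.lift (fun T => CTerm.star T V) fun _ _ => CStep.starL

theorem reflTransGen_star_right (U : CTerm) {V V' : CTerm} (h : ReflTransGen CStep V V') :
    ReflTransGen CStep (.star U V) (.star U V') :=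
  h.lift (fun T => CTerm.star U T) fun _ _ => CStep.starR

theorem subst_eq_self_of_not_mem_vars {T : CTerm} {x : ℕ} (h : x ∉ T.vars) (V : CTerm) :
    T.subst x V = T := by
  induction T with
  | var y =>
    have hy : y ≠ x := fun hyx => h (by simp [vars, hyx])
    simp [subst, hy]
  | app a b iha ihb =>
    simp only [vars, Finset.mem_union, not_or] at h
    simp [subst, iha h.1, ihb h.2]
  | star a b iha ihb =>
    simp only [vars, Finset.mem_union, not_or] at h
    simp [subst, iha h.1, ihb h.2]
  | _ => rfl

theorem I_app_reduces (W : CTerm) : ReflTransGen CStep (.app I W) W :=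
  .head CStep.s (.single CStep.k)

theorem lx_app_reduces (x : ℕ) {T : CTerm} (hT : T.PreTerm) (V : CTerm) :
    ReflTransGen CStep (.app (lx x T) V) (T.subst x V) := by
  induction T with
  | var y =>
    by_cases hy : y = x
    · subst hy
      simpa [lx, subst] using I_app_reduces V
    · simpa [lx, subst, hy] using ReflTransGen.single (CStep.k (U := var y) (V := V))
  | app a b iha ihb =>
    obtain ⟨ha, hb⟩ := hT
    by_cases hx : x ∈ (app a b).vars
    · rw [lx, if_pos hx, subst]
      exact .head CStep.s
        ((reflTransGen_app_left _ (iha ha)).trans (reflTransGen_app_right _ (ihb hb)))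
    · rw [lx, if_neg hx, subst_eq_self_of_not_mem_vars hx]
      exact .single CStep.k
  | star a b _ _ => exact hT.elim
  | _ => exact .single CStep.k

theorem star_lx_app_reduces (x : ℕ) {A B : CTerm} (hA : A.PreTerm) (hB : B.PreTerm)
    (V : CTerm) :
    ReflTransGen CStep (.star (.app (lx x A) V) (.app (lx x B) V))
      ((CTerm.star A B).subst x V) :=
  (reflTransGen_star_left _ (lx_app_reduces x hA V)).trans
    (reflTransGen_star_right _ (lx_app_reduces x hB V))

end CTerm

/-- If U is a star-term, then l_x(U) ⋆ V ▷* U[x:=V] and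
V ⋆ l_x(U) ▷* U[x:=V]. -/
theorem lx_star_reduces (x : ℕ) (U : CTerm) (hU : U.StarTerm) (V : CTerm) :
    Relation.ReflTransGen CStep (.star (CTerm.lx x U) V) (U.subst x V) ∧
    Relation.ReflTransGen CStep (.star V (CTerm.lx x U)) (U.subst x V) := by
  obtain ⟨A, B, hA, hB, rfl⟩ := hU
  exact ⟨.head CStep.cr (CTerm.star_lx_app_reduces x hA hB V),
    .head CStep.cl (CTerm.star_lx_app_reduces x hA hB V)⟩
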